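/- arXiv:2209.07444 — 10 statements merged into one kernel-verified Lean document; each statement's English description precedes it below -/
import Mathlib

section
/- Let m and k be natural numbers with m ≥ 1 and m! < k. Then for all natural numbers r, h with r ≤ h < k and every j with k − m ≤ j ≤ k − 1, one has P(h, r) < P(k, j). -/
/-- If `m ≥ 1` and `m! < k`, then for all `r ≤ h < k` and every `j` with
`k - m ≤ j ≤ k - 1`, one has `P(h, r) < P(k, j)`, where `P(a, b)` is the
falling factorial `Nat.descFactorial a b`. -/
theorem descFactorial_lt_of_factorial_lt (m k : ℕ) (hm : 1 ≤ m)
    (hmk : Nat.factorial m < k) :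
    ∀ r h j : ℕ, r ≤ h → h < k → k - m ≤ j → j ≤ k - 1 →
      Nat.descFactorial h r < Nat.descFactorial k j := by
  intro r h j hrh hhk hkm hjk
  have hk0 : 0 < k := lt_of_le_of_lt (Nat.zero_le _) hmk
  have hjk' : j ≤ k := le_trans hjk (Nat.sub_le _ _)
  have h1 : Nat.descFactorial h r ≤ Nat.factorial h := by
    calc Nat.descFactorial h r ≤ 1 * Nat.descFactorial h r := by omega
    _ ≤ (h - r).factorial * Nat.descFactorial h r :=
        Nat.mul_le_mul_right _ (Nat.one_le_iff_ne_zero.mpr (Nat.factorial_ne_zero _))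
    _ = Nat.factorial h := Nat.factorial_mul_descFactorial hrh
  have h2 : Nat.factorial h ≤ Nat.factorial (k - 1) :=
    Nat.factorial_le (by omega)
  have key : k * Nat.factorial (k - 1) = (k - j).factorial * Nat.descFactorial k j := by
    rw [Nat.factorial_mul_descFactorial hjk']
    cases k with
    | zero => omega
    | succ n => simp [Nat.factorial_succ]
  have hkj1 : 1 ≤ k - j := by omega
  have hkjm : k - j ≤ m := by omega
  have hfle : (k - j).factorial ≤ Nat.factorial m := Nat.factorial_le hkjm
  have hdpos : 0 < Nat.descFactorial k j := Nat.pos_of_ne_zero fun hz => absurd (Nat.descFactorial_eq_zero_iff_lt.mp hz) (by omega)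
  have h3 : Nat.factorial (k - 1) < Nat.descFactorial k j := by
    by_contra hcon
    push_neg at hcon
    have : k * Nat.factorial (k - 1) < k * Nat.factorial (k - 1) := by
      calc k * Nat.factorial (k - 1) = (k - j).factorial * Nat.descFactorial k j := key
      _ ≤ Nat.factorial m * Nat.descFactorial k j := Nat.mul_le_mul_right _ hfle
      _ < k * Nat.descFactorial k j := Nat.mul_lt_mul_of_lt_of_le hmk le_rfl hdpos
      _ ≤ k * Nat.factorial (k - 1) := Nat.mul_le_mul_left _ hcon
    omega
  omega
end

section
/- Let s be a natural number with s ≥ 2 and let q be a prime number with q > s + √(s+1) (as real numbers). Then P(q+1, s) ≠ P(k, r) for all natural numbers k and r with r > s. -/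
/-- If `s ≥ 2` and `q` is a prime with `q > s + √(s+1)`, then
`P(q+1, s) ≠ P(k, r)` for all `k` and all `r > s`. -/
theorem descFactorial_succ_prime_ne (s q : ℕ) (hs : 2 ≤ s) (hq : Nat.Prime q)
    (hqs : (s : ℝ) + Real.sqrt ((s : ℝ) + 1) < (q : ℝ)) :
    ∀ k r : ℕ, s < r → Nat.descFactorial (q + 1) s ≠ Nat.descFactorial k r := by
  -- basic consequences of the hypothesis on q
  have hsq : s < q := by
    have h0 : (0 : ℝ) ≤ Real.sqrt ((s : ℝ) + 1) := Real.sqrt_nonneg _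
    have : (s : ℝ) < (q : ℝ) := by linarith
    exact_mod_cast this
  have key : s + 2 ≤ (q - s) * (q - s) := by
    have h1 : Real.sqrt ((s : ℝ) + 1) < (q : ℝ) - s := by linarith
    have h2 : (s : ℝ) + 1 < ((q : ℝ) - s) ^ 2 := by
      have hy : (0 : ℝ) < (q : ℝ) - s := lt_of_le_of_lt (Real.sqrt_nonneg _) h1
      exact (Real.sqrt_lt' hy).mp h1
    have h3 : ((s : ℝ) + 1) < (((q - s : ℕ) : ℝ)) ^ 2 := by
      rwa [Nat.cast_sub hsq.le]
    have h4 : s + 1 < (q - s) ^ 2 := by exact_mod_cast h3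
    have : (q - s) ^ 2 = (q - s) * (q - s) := sq (q - s)
    omega
  -- the target value and positivity
  set A := Nat.descFactorial (q + 1) s with hA
  have hApos : 0 < A := by
    rw [hA]
    exact Nat.pos_of_ne_zero (by rw [Ne, Nat.descFactorial_eq_zero_iff_lt]; omega)
  intro k r hr hEq
  have hrk : r ≤ k := by
    by_contra h
    rw [Nat.descFactorial_eq_zero_iff_lt.mpr (by omega)] at hEq
    omega
  -- q divides A
  obtain ⟨s', rfl⟩ : ∃ s', s = s' + 2 := ⟨s - 2, by omega⟩
  obtain ⟨q', rfl⟩ : ∃ q', q = q' + 1 := ⟨q - 1, by omega⟩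
  have hAfac : A = (q' + 1 + 1) * ((q' + 1) * Nat.descFactorial q' s') := by
    rw [hA, Nat.succ_descFactorial_succ, Nat.succ_descFactorial_succ]
  have hqdvdA : (q' + 1) ∣ A := ⟨(q' + 1 + 1) * Nat.descFactorial q' s', by rw [hAfac]; ring⟩
  -- k ≤ q
  have hkq : k ≤ q' + 1 := by
    by_contra h
    push_neg at h
    have hsplit : Nat.descFactorial (k - (s' + 3)) (r - (s' + 3)) *
        Nat.descFactorial k (s' + 3) = Nat.descFactorial k r :=
      Nat.descFactorial_mul_descFactorial (by omega)
    have hpos1 : 0 < Nat.descFactorial (k - (s' + 3)) (r - (s' + 3)) := by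
      exact Nat.pos_of_ne_zero (by rw [Ne, Nat.descFactorial_eq_zero_iff_lt]; omega)
    have hle1 : Nat.descFactorial k (s' + 3) ≤ A := by
      calc Nat.descFactorial k (s' + 3)
          ≤ Nat.descFactorial (k - (s' + 3)) (r - (s' + 3)) *
            Nat.descFactorial k (s' + 3) := Nat.le_mul_of_pos_left _ hpos1
        _ = Nat.descFactorial k r := hsplit
        _ = A := hEq.symm
    have hle2 : Nat.descFactorial (q' + 2) (s' + 3) ≤ Nat.descFactorial k (s' + 3) :=
      Nat.descFactorial_le _ (by omega)
    have heq2 : Nat.descFactorial (q' + 2) (s' + 3) = (q' + 2 - (s' + 2)) * A := by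
      rw [hA, Nat.descFactorial_succ]
    have : 2 ≤ q' + 2 - (s' + 2) := by omega
    nlinarith
  -- q appears as a factor of descFactorial k r, hence k = q
  have hqdvd : (q' + 1) ∣ Nat.descFactorial k r := hEq ▸ hqdvdA
  rw [Nat.descFactorial_eq_prod_range] at hqdvd
  obtain ⟨i, hi, hdvd⟩ := hq.prime.exists_mem_finset_dvd hqdvd
  rw [Finset.mem_range] at hi
  have hki : k - i = q' + 1 := by
    have h1 : q' + 1 ≤ k - i := Nat.le_of_dvd (by omega) hdvd
    omega
  have hk : k = q' + 1 := by omega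
  subst hk
  -- final contradiction
  clear hqdvd hdvd hi hqdvdA
  have hrq : r ≤ q' + 1 := hrk
  have hsplit : Nat.descFactorial (q' + 1 - (s' + 2)) (r - (s' + 2)) *
      Nat.descFactorial (q' + 1) (s' + 2) = Nat.descFactorial (q' + 1) r :=
    Nat.descFactorial_mul_descFactorial (by omega)
  have hB : Nat.descFactorial (q' + 1) (s' + 2) =
      (q' + 1 - (s' + 1)) * Nat.descFactorial (q' + 1) (s' + 1) := Nat.descFactorial_succ _ _
  have hA2 : A = (q' + 2) * Nat.descFactorial (q' + 1) (s' + 1) := by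
    rw [hA, Nat.succ_descFactorial_succ]
  have hBpos : 0 < Nat.descFactorial (q' + 1) (s' + 1) := by
    exact Nat.pos_of_ne_zero (by rw [Ne, Nat.descFactorial_eq_zero_iff_lt]; omega)
  set C := Nat.descFactorial (q' + 1 - (s' + 2)) (r - (s' + 2)) with hC
  set B := Nat.descFactorial (q' + 1) (s' + 1) with hBdef
  have hmain : C * ((q' + 1 - (s' + 1)) * B) = (q' + 2) * B := by
    rw [← hB, hsplit, ← hEq, hA2]
  have hmain2 : C * (q' + 1 - (s' + 1)) = q' + 2 :=
    Nat.eq_of_mul_eq_mul_right hBpos (by rw [mul_assoc]; exact hmain)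
  have hCpos : 0 < C := by
    rcases Nat.eq_zero_or_pos C with h | h
    · rw [h] at hmain2; omega
    · exact h
  have hrle : r - (s' + 2) ≤ q' + 1 - (s' + 2) := by
    by_contra h
    rw [hC, Nat.descFactorial_eq_zero_iff_lt.mpr (by omega)] at hCpos
    omega
  have hClarge : q' + 1 - (s' + 2) ≤ C := by
    obtain ⟨m, hm⟩ : ∃ m, r - (s' + 2) = m + 1 := ⟨r - (s' + 3), by omega⟩
    have hsp : Nat.descFactorial (q' + 1 - (s' + 2) - 1) (m + 1 - 1) *
        Nat.descFactorial (q' + 1 - (s' + 2)) 1 =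
        Nat.descFactorial (q' + 1 - (s' + 2)) (m + 1) :=
      Nat.descFactorial_mul_descFactorial (by omega)
    rw [Nat.descFactorial_one] at hsp
    have hp : 0 < Nat.descFactorial (q' + 1 - (s' + 2) - 1) (m + 1 - 1) :=
      Nat.pos_of_ne_zero (by rw [Ne, Nat.descFactorial_eq_zero_iff_lt]; omega)
    calc q' + 1 - (s' + 2) ≤ Nat.descFactorial (q' + 1 - (s' + 2) - 1) (m + 1 - 1) *
          (q' + 1 - (s' + 2)) := Nat.le_mul_of_pos_left _ hp
      _ = Nat.descFactorial (q' + 1 - (s' + 2)) (m + 1) := hsp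
      _ = C := by rw [hC, hm]
  have hfin : (q' + 1 - (s' + 2)) * (q' + 1 - (s' + 1)) ≤ q' + 2 :=
    hmain2 ▸ Nat.mul_le_mul_right _ hClarge
  obtain ⟨t, rfl⟩ : ∃ t, q' = s' + 2 + t := ⟨q' - (s' + 2), by omega⟩
  have e1 : s' + 2 + t + 1 - (s' + 2) = t + 1 := by omega
  have e2 : s' + 2 + t + 1 - (s' + 1) = t + 2 := by omega
  rw [e1] at key
  rw [e1, e2] at hfin
  have hexp : (t + 1) * (t + 2) = (t + 1) * (t + 1) + (t + 1) := by ring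
  omega
end

section
/- Let s be a natural number with s ≥ 3 and let q be a prime number with q > 4s. Then P(q+2, s) ≠ P(k, r) for all natural numbers k and r with r > s. -/
/-- If `s ≥ 3` and `q` is a prime with `q > 4s`, then
`P(q+2, s) ≠ P(k, r)` for all `k` and all `r > s`. -/
theorem descFactorial_add_two_prime_ne (s q : ℕ) (hs : 3 ≤ s) (hq : Nat.Prime q)
    (hqs : 4 * s < q) :
    ∀ k r : ℕ, s < r → Nat.descFactorial (q + 2) s ≠ Nat.descFactorial k r := by
  intro k r hr h
  have hApos : 0 < Nat.descFactorial (q + 2) s :=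
    Nat.pos_of_ne_zero fun hz => by
      have := Nat.descFactorial_eq_zero_iff_lt.1 hz; omega
  have hqA : q ∣ Nat.descFactorial (q + 2) s := by
    rw [Nat.descFactorial_eq_prod_range]
    have h2 : (2 : ℕ) ∈ Finset.range s := Finset.mem_range.2 (by omega)
    simpa using Finset.dvd_prod_of_mem (fun i => q + 2 - i) h2
  have hBpos : 0 < Nat.descFactorial k r := h ▸ hApos
  have hrk : r ≤ k := by
    by_contra hc
    rw [Nat.descFactorial_eq_zero_iff_lt.2 (by omega)] at hBpos; omega
  have hqk : q ≤ k := by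
    have hqB : q ∣ Nat.descFactorial k r := h ▸ hqA
    rw [Nat.descFactorial_eq_prod_range] at hqB
    obtain ⟨i, hi, hdvd⟩ := hq.prime.exists_mem_finset_dvd hqB
    rw [Finset.mem_range] at hi
    have hpos : 0 < k - i := by omega
    have := Nat.le_of_dvd hpos hdvd
    omega
  -- mono in second argument (given k ≥ r)
  have h2 : Nat.descFactorial k (s + 1) ≤ Nat.descFactorial k r := by
    rw [Nat.descFactorial_eq_prod_range, Nat.descFactorial_eq_prod_range]
    apply Finset.prod_le_prod_of_subset_of_one_le'
    · exact Finset.range_subset_range.2 (by omega)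
    · intro i hi _
      rw [Finset.mem_range] at hi
      omega
  have h1 : Nat.descFactorial q (s + 1) ≤ Nat.descFactorial k (s + 1) :=
    Nat.descFactorial_le _ hqk
  have h3 : Nat.descFactorial (q + 2) s < Nat.descFactorial q (s + 1) := by
    obtain ⟨m, rfl⟩ : ∃ m, s = m + 3 := ⟨s - 3, by omega⟩
    have hD : 0 < Nat.descFactorial q (m + 1) :=
      Nat.pos_of_ne_zero fun hz => by
        have := Nat.descFactorial_eq_zero_iff_lt.1 hz; omega
    have e1 : Nat.descFactorial (q + 2) (m + 3)
        = (q + 2) * ((q + 1) * Nat.descFactorial q (m + 1)) := by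
      rw [show m + 3 = (m + 1) + 1 + 1 from rfl, Nat.succ_descFactorial_succ,
        Nat.succ_descFactorial_succ]
    have e2 : Nat.descFactorial q (m + 3 + 1)
        = (q - (m + 3)) * ((q - (m + 2)) * ((q - (m + 1)) * Nat.descFactorial q (m + 1))) := by
      rw [Nat.descFactorial_succ, Nat.descFactorial_succ, Nat.descFactorial_succ]
    rw [e1, e2]
    have key : (q + 2) * (q + 1) < (q - (m + 3)) * ((q - (m + 2)) * (q - (m + 1))) := by
      have ha : q - (m + 3) = q - m - 3 := by omega
      have h1 : q + 2 ≤ 2 * (q - (m + 3)) := by omega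
      have h2 : q + 1 ≤ 2 * (q - (m + 2)) := by omega
      have h3 : 4 < q - (m + 1) := by omega
      calc (q + 2) * (q + 1) ≤ (2 * (q - (m + 3))) * (2 * (q - (m + 2))) :=
            Nat.mul_le_mul h1 h2
        _ = (q - (m + 3)) * ((q - (m + 2)) * 4) := by ring
        _ < (q - (m + 3)) * ((q - (m + 2)) * (q - (m + 1))) := by
            apply Nat.mul_lt_mul_of_pos_left _ (show 0 < q - (m + 3) by omega)
            exact Nat.mul_lt_mul_of_pos_left h3 (by omega)
      -- positivity side goals handled above
    calc (q + 2) * ((q + 1) * Nat.descFactorial q (m + 1))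
        = ((q + 2) * (q + 1)) * Nat.descFactorial q (m + 1) := by ring
      _ < ((q - (m + 3)) * ((q - (m + 2)) * (q - (m + 1)))) * Nat.descFactorial q (m + 1) :=
          Nat.mul_lt_mul_of_pos_right key hD
      _ = (q - (m + 3)) * ((q - (m + 2)) * ((q - (m + 1)) * Nat.descFactorial q (m + 1))) := by
          ring
  omega
end

section
/- Let q be a prime number, let l, k be positive natural numbers, and set m = l + v_q(l!). Then P(q^m·k + q·l − 1, q·l − 1) ≠ P(h, r) for all natural numbers h and r with r ≥ q·l. -/
/-!
Put `b = q·l − 1`. Modulo `q^m` every factor `q^m·k + j` of `P(q^m·k + b, b)` is congruent to `j`,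
so the left-hand side is congruent to `b!`. By Legendre's formula `v_q((q·l)!) = l + v_q(l!) = m`,
and since `q ∣ q·l` the valuation of `b! = (q·l)!/(q·l)` is smaller, so `q^m ∤ b!`. On the other
hand `r ≥ q·l` gives `q^m ∣ (q·l)! ∣ r! ∣ P(h, r)`.
-/

open Nat

theorem Nat.descFactorial_add_modEq_factorial {d a : ℕ} (hda : d ∣ a) (b : ℕ) :
    (a + b).descFactorial b ≡ b ! [MOD d] := by
  induction b with
  | zero => rfl
  | succ b ih =>
    have hfactor : a + b + 1 ≡ b + 1 [MOD d] := by
      simpa [add_assoc] using (modEq_zero_iff_dvd.2 hda).add_right (b + 1)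
    rw [← add_assoc, succ_descFactorial_succ, factorial_succ]
    exact hfactor.mul ih

theorem padicValNat_factorial_pred_lt {p n : ℕ} [Fact p.Prime] (hn : n ≠ 0) (hpn : p ∣ n) :
    padicValNat p (n - 1)! < padicValNat p n ! := by
  obtain ⟨n, rfl⟩ := exists_eq_add_one_of_ne_zero hn
  have hvn := one_le_padicValNat_of_dvd n.add_one_ne_zero hpn
  rw [factorial_succ, padicValNat.mul n.add_one_ne_zero (factorial_ne_zero n), add_tsub_cancel_right]
  omega

theorem descFactorial_padic_ne_general (q l k : ℕ) (hq : Nat.Prime q) (hl : 0 < l)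
    (m : ℕ) (hm : m = l + padicValNat q (Nat.factorial l)) :
    ∀ h r : ℕ, q * l ≤ r →
      Nat.descFactorial (q ^ m * k + q * l - 1) (q * l - 1) ≠
        Nat.descFactorial h r := by
  have : Fact q.Prime := ⟨hq⟩
  intro h r hr heq
  have hql : q * l ≠ 0 := (Nat.mul_pos hq.pos hl).ne'
  obtain ⟨b, hb⟩ := exists_eq_add_one_of_ne_zero hql
  have hv : padicValNat q (q * l)! = m := by rw [padicValNat_factorial_mul, hm, add_comm]
  have hlhs : (q ^ m * k + q * l - 1).descFactorial (q * l - 1) ≡ b ! [MOD q ^ m] := by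
    rw [hb, add_tsub_cancel_right, ← add_assoc, add_tsub_cancel_right]
    exact descFactorial_add_modEq_factorial (dvd_mul_right _ _) b
  have hrhs : q ^ m ∣ h.descFactorial r := hv ▸ pow_padicValNat_dvd.trans
    ((factorial_dvd_factorial hr).trans (factorial_dvd_descFactorial h r))
  have hb_fac : ¬ q ^ m ∣ b ! := by
    rw [padicValNat_dvd_iff_le (factorial_ne_zero b), not_le, ← hv]
    simpa [hb] using padicValNat_factorial_pred_lt hql (dvd_mul_right q l)
  exact hb_fac ((hlhs.dvd_iff dvd_rfl).1 (heq ▸ hrhs))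

/-- For a prime `q`, positive naturals `l, k`, and `m = l + v_q(l!)`,
one has `P(q^m·k + q·l − 1, q·l − 1) ≠ P(h, r)` whenever `r ≥ q·l`. -/
theorem descFactorial_padic_ne (q l k : ℕ) (hq : Nat.Prime q) (hl : 0 < l)
    (hk : 0 < k) (m : ℕ) (hm : m = l + padicValNat q (Nat.factorial l)) :
    ∀ h r : ℕ, q * l ≤ r →
      Nat.descFactorial (q ^ m * k + q * l - 1) (q * l - 1) ≠
        Nat.descFactorial h r :=
  descFactorial_padic_ne_general q l k hq hl m hm
end

section
/- Let q be a prime number, let l, k be positive natural numbers, and set m = l + v_q(l!). Then P(q^m·(k + l) − 1, q·l − 1) ≠ P(h, r) for all natural numbers h and r with r ≥ q·l. -/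
/-!
Write `A = q^m (k + l)` and `s = q l ≤ q^l ≤ q^m`. For `0 < j < q^m` the factor `A - j` has the same
`q`-adic valuation as `j`, so `P(A - 1, s - 1) = ∏_{j < s} (A - j)` has the valuation of `(s - 1)!`.
On the other hand, for `r ≥ s` the product `P(h, r)` is divisible by `s! = s · (s - 1)!`, whose
valuation is strictly larger because `q ∣ s`.
-/

open Nat

variable {p : ℕ} [Fact p.Prime]

lemma padicValNat_sub_of_pow_dvd {n a j : ℕ} (ha : p ^ n ∣ a) (ha0 : a ≠ 0) (hj0 : j ≠ 0)
    (hjn : j < p ^ n) : padicValNat p (a - j) = padicValNat p j := by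
  set t := padicValNat p j
  have htn : t < n :=
    (Nat.pow_lt_pow_iff_right (Fact.out : p.Prime).one_lt).mp
      ((Nat.le_of_dvd (Nat.pos_of_ne_zero hj0) pow_padicValNat_dvd).trans_lt hjn)
  have hja : j < a := hjn.trans_le (Nat.le_of_dvd (Nat.pos_of_ne_zero ha0) ha)
  have hsub0 : a - j ≠ 0 := by omega
  have hdvd : p ^ t ∣ a - j :=
    (Nat.dvd_sub_iff_right hja.le ((pow_dvd_pow p htn.le).trans ha)).mpr pow_padicValNat_dvd
  have hndvd : ¬ p ^ (t + 1) ∣ a - j := by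
    rw [Nat.dvd_sub_iff_right hja.le ((pow_dvd_pow p htn).trans ha)]
    exact pow_succ_padicValNat_not_dvd hj0
  rw [padicValNat_dvd_iff_le hsub0] at hdvd hndvd
  omega

lemma padicValNat_descFactorial_pred_of_pow_dvd {n a b : ℕ} (ha : p ^ n ∣ a) (ha0 : a ≠ 0)
    (hb : b < p ^ n) : padicValNat p ((a - 1).descFactorial b) = padicValNat p b ! := by
  induction b with
  | zero => simp
  | succ b ih =>
    have hba : b + 1 < a := hb.trans_le (Nat.le_of_dvd (Nat.pos_of_ne_zero ha0) ha)
    rw [descFactorial_succ, factorial_succ, Nat.sub_sub, add_comm 1 b,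
      padicValNat.mul (by omega) (descFactorial_eq_zero_iff_lt.not.mpr (by omega)),
      padicValNat.mul b.succ_ne_zero (factorial_ne_zero b), ih (by omega),
      padicValNat_sub_of_pow_dvd ha ha0 b.succ_ne_zero hb]

lemma padicValNat_factorial_le_descFactorial {s h r : ℕ} (hsr : s ≤ r)
    (h0 : h.descFactorial r ≠ 0) : padicValNat p s ! ≤ padicValNat p (h.descFactorial r) :=
  (padicValNat_dvd_iff_le h0).mp <|
    pow_padicValNat_dvd.trans ((factorial_dvd_factorial hsr).trans (factorial_dvd_descFactorial h r))

lemma padicValNat_factorial_pred_lt_s4 {s : ℕ} (hs : s ≠ 0) (hps : p ∣ s) :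
    padicValNat p (s - 1)! < padicValNat p s ! := by
  obtain ⟨t, rfl⟩ := exists_eq_succ_of_ne_zero hs
  rw [factorial_succ, padicValNat.mul hs (factorial_ne_zero t), Nat.succ_sub_one]
  have := one_le_padicValNat_of_dvd hs hps
  omega

theorem descFactorial_pred_ne_descFactorial {n a s : ℕ} (ha : p ^ n ∣ a) (ha0 : a ≠ 0)
    (hs : s ≠ 0) (hps : p ∣ s) (hsn : s ≤ p ^ n) {h r : ℕ} (hsr : s ≤ r) :
    (a - 1).descFactorial (s - 1) ≠ h.descFactorial r := by
  intro heq
  have hsa : s ≤ a := hsn.trans (Nat.le_of_dvd (Nat.pos_of_ne_zero ha0) ha)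
  have h0 : h.descFactorial r ≠ 0 := heq ▸ descFactorial_eq_zero_iff_lt.not.mpr (by omega)
  have hle := padicValNat_factorial_le_descFactorial (p := p) hsr h0
  rw [← heq, padicValNat_descFactorial_pred_of_pow_dvd ha ha0 (by omega)] at hle
  exact (padicValNat_factorial_pred_lt_s4 hs hps).not_ge hle

theorem descFactorial_padic_ne'_general (q l k : ℕ) (hq : Nat.Prime q) (hl : 0 < l)
    (m : ℕ) (hm : m = l + padicValNat q (Nat.factorial l)) :
    ∀ h r : ℕ, q * l ≤ r →
      Nat.descFactorial (q ^ m * (k + l) - 1) (q * l - 1) ≠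
        Nat.descFactorial h r := by
  have := Fact.mk hq
  intro h r hr
  have hlm : q * l ≤ q ^ m :=
    (Nat.mul_le_pow hq.ne_one l).trans (Nat.pow_le_pow_right hq.pos (by omega))
  exact descFactorial_pred_ne_descFactorial (dvd_mul_right _ _) (by simp [hq.ne_zero]; omega)
    (by simp [hq.ne_zero]; omega) (dvd_mul_right q l) hlm hr

/-- For a prime `q`, positive naturals `l, k`, and `m = l + v_q(l!)`,
one has `P(q^m·(k + l) − 1, q·l − 1) ≠ P(h, r)` whenever `r ≥ q·l`. -/
theorem descFactorial_padic_ne' (q l k : ℕ) (hq : Nat.Prime q) (hl : 0 < l)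
    (hk : 0 < k) (m : ℕ) (hm : m = l + padicValNat q (Nat.factorial l)) :
    ∀ h r : ℕ, q * l ≤ r →
      Nat.descFactorial (q ^ m * (k + l) - 1) (q * l - 1) ≠
        Nat.descFactorial h r :=
  descFactorial_padic_ne'_general q l k hq hl m hm
end

section
/- Let q be a prime number and let h be a positive natural number such that q^h ≠ 3. Then P(2·q^h, 1) ≠ P(k, r) for all natural numbers k and r with r > 1; equivalently, 2·q^h is not equal to a product k·(k−1)···(k−r+1) of r ≥ 2 consecutive integers. -/
/-- Helper: if `o` is odd, `e` is even, both at least 2, consecutive, coprime,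
and `o * e ∣ 2 * q ^ h` with `q` prime, then `o = 3` and `e = 2`. -/
lemma aux_consec_dvd (q h o e : ℕ) (hq : Nat.Prime q) (ho : Odd o) (he : Even e)
    (h2o : 2 ≤ o) (hcons : o = e + 1 ∨ e = o + 1) (hcop : Nat.Coprime o e)
    (hdvd : o * e ∣ 2 * q ^ h) : o = 3 ∧ e = 2 := by
  have hodvd : o ∣ 2 * q ^ h := dvd_trans (Dvd.intro e rfl) hdvd
  have hcop2 : Nat.Coprime o 2 := by
    exact Nat.coprime_two_right.mpr ho
  have hoq : o ∣ q ^ h := hcop2.dvd_of_dvd_mul_left hodvd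
  obtain ⟨i, hi, rfl⟩ := (Nat.dvd_prime_pow hq).mp hoq
  have hi1 : 1 ≤ i := by
    by_contra hi0
    interval_cases i
    · simp at h2o
  have hqo : q ∣ q ^ i := dvd_pow_self q (by omega)
  have hcopeq : Nat.Coprime e q := Nat.Coprime.coprime_dvd_right hqo hcop.symm
  have hedvd : e ∣ 2 * q ^ h := dvd_trans (Dvd.intro_left _ rfl) hdvd
  have he2 : e ∣ 2 := (Nat.Coprime.pow_right h hcopeq).dvd_of_dvd_mul_right hedvd
  have hele : e ≤ 2 := Nat.le_of_dvd two_pos he2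
  obtain ⟨t, rfl⟩ := he
  have het : t = 1 := by omega
  subst het
  constructor
  · omega
  · rfl

/-- For a prime `q` and a positive natural `h` with `q^h ≠ 3`,
`P(2·q^h, 1) ≠ P(k, r)` for all `k` and all `r > 1`. -/
theorem two_mul_prime_pow_ne_descFactorial (q h : ℕ) (hq : Nat.Prime q)
    (hh : 0 < h) (hq3 : q ^ h ≠ 3) :
    ∀ k r : ℕ, 1 < r →
      Nat.descFactorial (2 * q ^ h) 1 ≠ Nat.descFactorial k r := by
  intro k r hr hEq
  rw [Nat.descFactorial_one] at hEq
  have hqpos : 0 < q ^ h := pow_pos hq.pos h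
  have hq2 : 2 ≤ q ^ h := Nat.one_lt_pow (by omega) hq.one_lt
  have hne0 : 2 * q ^ h ≠ 0 := by positivity
  have hkr : r ≤ k := by
    by_contra hlt
    rw [Nat.descFactorial_eq_zero_iff_lt.mpr (not_le.mp hlt)] at hEq
    exact hne0 hEq
  obtain ⟨s, rfl⟩ : ∃ s, r = s + 2 := ⟨r - 2, by omega⟩
  obtain ⟨m, rfl⟩ : ∃ m, k = m + 2 := ⟨k - 2, by omega⟩
  have hfac : 2 * q ^ h = (m + 2) * ((m + 1) * Nat.descFactorial m s) := by
    rw [hEq, Nat.succ_descFactorial_succ, Nat.succ_descFactorial_succ]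
  have hdvd : (m + 2) * (m + 1) ∣ 2 * q ^ h :=
    ⟨Nat.descFactorial m s, by rw [hfac]; ring⟩
  -- case m = 0
  rcases Nat.eq_zero_or_pos m with rfl | hm
  · -- 2 * q^h = 2 * descFactorial 0 s, but descFactorial 0 s ≤ 1
    have : Nat.descFactorial 0 s ≤ 1 := by
      cases s with
      | zero => simp
      | succ t => simp
    simp only [Nat.zero_add] at hfac
    omega
  -- m ≥ 1 : the odd one among m+1, m+2
  have hcop : Nat.Coprime (m + 1) (m + 2) := by
    have h1 : Nat.gcd (m + 1) (m + 2) ∣ m + 2 - (m + 1) :=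
      Nat.dvd_sub (Nat.gcd_dvd_right _ _) (Nat.gcd_dvd_left _ _)
    simp only [Nat.add_sub_add_left] at h1
    exact Nat.eq_one_of_dvd_one (by simpa using h1)
  have hm1 : m = 1 := by
    rcases Nat.even_or_odd m with hev | hod
    · -- m even : o = m+1 odd, e = m+2 even
      have ho : Odd (m + 1) := hev.add_one
      have he : Even (m + 2) := by
        obtain ⟨t, rfl⟩ := hev; exact ⟨t + 1, by ring⟩
      have := aux_consec_dvd q h (m + 1) (m + 2) hq ho he (by omega)
        (Or.inr rfl) hcop (by rw [Nat.mul_comm] at hdvd; exact hdvd)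
      omega
    · -- m odd : o = m+2 odd, e = m+1 even
      have ho : Odd (m + 2) := by
        obtain ⟨t, rfl⟩ := hod; exact ⟨t + 1, by ring⟩
      have he : Even (m + 1) := by
        obtain ⟨t, rfl⟩ := hod; exact ⟨t + 1, by ring⟩
      have := aux_consec_dvd q h (m + 2) (m + 1) hq ho he (by omega)
        (Or.inl rfl) hcop.symm hdvd
      omega
  subst hm1
  have hd1 : Nat.descFactorial 1 s ≤ 1 := by
    cases s with
    | zero => simp
    | succ t => cases t <;> simp
  omega
end

section
/- Let q be a prime number, let l, k be positive natural numbers, and set m = l + v_q(l!). Then the q-adic valuation of P(q^m·k + q·l − 1, q·l − 1) equals v_q((q·l − 1)!), and this value is strictly less than m. -/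
/-!
If `q ^ m ∣ N` and `0 < j < q ^ m`, then `N + j` and `j` have the same `q`-adic valuation, since
that valuation is below `m`. Applying this to each factor of
`P(N + b, b) = (N + 1) ⋯ (N + b)` with `N = q ^ m k` and `b = q l - 1` gives
`v_q(P(N + b, b)) = v_q(b!)`. By Legendre, `v_q((q l)!) = l + v_q(l!) = m`, so
`v_q((q l - 1)!) = m - v_q(q l) < m`, and `q l ≤ q ^ l ≤ q ^ m` gives `b < q ^ m`.
-/

namespace Nat

variable {q : ℕ} [Fact q.Prime]

theorem padicValNat_add_of_pow_dvd_of_lt {m N j : ℕ} (hN : q ^ m ∣ N) (hj : j ≠ 0)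
    (hjm : j < q ^ m) : padicValNat q (N + j) = padicValNat q j := by
  have hvj : padicValNat q j < m :=
    (padicValNat_le_nat_log j).trans_lt (Nat.log_lt_of_lt_pow hj hjm)
  have hdvd : ∀ n ≤ m, q ^ n ∣ N + j ↔ q ^ n ∣ j := fun n hn =>
    (Nat.dvd_add_right ((pow_dvd_pow q hn).trans hN))
  apply le_antisymm
  · by_contra! h
    have hsucc : q ^ (padicValNat q j + 1) ∣ N + j :=
      (padicValNat_dvd_iff_le (by omega)).2 h
    exact pow_succ_padicValNat_not_dvd hj ((hdvd _ hvj).1 hsucc)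
  · exact (padicValNat_dvd_iff_le (by omega)).1 ((hdvd _ hvj.le).2 pow_padicValNat_dvd)

theorem padicValNat_descFactorial_add_of_pow_dvd {m N b : ℕ} (hN : q ^ m ∣ N)
    (hb : b < q ^ m) : padicValNat q ((N + b).descFactorial b) = padicValNat q b ! := by
  induction b with
  | zero => simp
  | succ b ih =>
    rw [← Nat.add_assoc, Nat.succ_descFactorial_succ, Nat.factorial_succ,
      padicValNat.mul (by omega) (by simp), padicValNat.mul (by omega) (Nat.factorial_ne_zero b),
      ih (by omega), Nat.add_assoc, padicValNat_add_of_pow_dvd_of_lt hN (by omega) hb]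

theorem padicValNat_factorial_mul_sub_one_lt {l : ℕ} (hl : 0 < l) :
    padicValNat q (q * l - 1)! < l + padicValNat q l ! := by
  have hql : q * l ≠ 0 := Nat.mul_ne_zero (Fact.out : q.Prime).ne_zero hl.ne'
  have hsplit : padicValNat q (q * l)! = padicValNat q (q * l) + padicValNat q (q * l - 1)! := by
    rw [← Nat.mul_factorial_pred hql, padicValNat.mul hql (Nat.factorial_ne_zero _)]
  have hpos : 1 ≤ padicValNat q (q * l) := one_le_padicValNat_of_dvd hql (dvd_mul_right q l)
  have hlegendre := padicValNat_factorial_mul (p := q) l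
  omega

end Nat

theorem padicValNat_descFactorial_eq_general (q l k : ℕ) (hq : Nat.Prime q) (hl : 0 < l)
    (m : ℕ) (hm : m = l + padicValNat q (Nat.factorial l)) :
    padicValNat q (Nat.descFactorial (q ^ m * k + q * l - 1) (q * l - 1)) =
      padicValNat q (Nat.factorial (q * l - 1)) ∧
    padicValNat q (Nat.factorial (q * l - 1)) < m := by
  have : Fact q.Prime := ⟨hq⟩
  have hql_le : q * l ≤ q ^ m :=
    (Nat.mul_le_pow hq.one_lt.ne' l).trans (Nat.pow_le_pow_right hq.pos (by omega))
  have hql_pos : 0 < q * l := Nat.mul_pos hq.pos hl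
  refine ⟨?_, hm ▸ Nat.padicValNat_factorial_mul_sub_one_lt hl⟩
  rw [Nat.add_sub_assoc hql_pos]
  exact Nat.padicValNat_descFactorial_add_of_pow_dvd (dvd_mul_right _ k) (by omega)

/-- For a prime `q`, positive naturals `l, k`, and `m = l + v_q(l!)`, the
`q`-adic valuation of `P(q^m·k + q·l − 1, q·l − 1)` equals `v_q((q·l − 1)!)`,
and this value is strictly less than `m`. -/
theorem padicValNat_descFactorial_eq (q l k : ℕ) (hq : Nat.Prime q) (hl : 0 < l)
    (hk : 0 < k) (m : ℕ) (hm : m = l + padicValNat q (Nat.factorial l)) :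
    padicValNat q (Nat.descFactorial (q ^ m * k + q * l - 1) (q * l - 1)) =
      padicValNat q (Nat.factorial (q * l - 1)) ∧
    padicValNat q (Nat.factorial (q * l - 1)) < m :=
  padicValNat_descFactorial_eq_general q l k hq hl m hm
end

section
/- Let q be a prime number and l a positive natural number. Then for all natural numbers h, r with h ≥ r ≥ q·l, the q-adic valuation of P(h, r) is at least l + v_q(l!). -/
theorem padic_mono_dvd {q a b : ℕ} (hq : Fact q.Prime) (hb : b ≠ 0) (h : a ∣ b) :
    padicValNat q a ≤ padicValNat q b :=
  (padicValNat_dvd_iff_le hb).mp (pow_padicValNat_dvd.trans h)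

/-- For a prime `q` and positive natural `l`, for all `h ≥ r ≥ q·l`, the
`q`-adic valuation of `P(h, r)` is at least `l + v_q(l!)`. -/
theorem le_padicValNat_descFactorial (q l : ℕ) (hq : Nat.Prime q) (hl : 0 < l) :
    ∀ h r : ℕ, q * l ≤ r → r ≤ h →
      l + padicValNat q (Nat.factorial l) ≤
        padicValNat q (Nat.descFactorial h r) := by
  haveI : Fact q.Prime := ⟨hq⟩
  intro h r hql hrh
  have h1 : padicValNat q (Nat.factorial (q * l)) = padicValNat q (Nat.factorial l) + l :=
    padicValNat_factorial_mul l
  have hd0 : Nat.descFactorial h r ≠ 0 := by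
    simp only [ne_eq, Nat.descFactorial_eq_zero_iff_lt]
    omega
  have h2 : padicValNat q (Nat.factorial (q * l)) ≤ padicValNat q (Nat.factorial r) :=
    padic_mono_dvd ‹_› (Nat.factorial_ne_zero r) (Nat.factorial_dvd_factorial hql)
  have h3 : padicValNat q (Nat.factorial r) ≤ padicValNat q (Nat.descFactorial h r) :=
    padic_mono_dvd ‹_› hd0 (Nat.factorial_dvd_descFactorial h r)
  omega
end

section
/- For each natural number k ≥ 3, let m_k denote the unique positive integer satisfying m_k! < k ≤ (m_k + 1)!. Then for every natural number n ≥ 7 (so that m_n ≥ 3), one has Σ_{k=3}^{n} m_k = n·m_n − m_n! − 4 − Σ_{k=3}^{m_n − 1} k!. -/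
/-!
Both sides grow by `m_{n+1}` from `n` to `n + 1`. The index `m_n` stays put unless
`n = (m_n + 1)!`, where it increases by one. In the first case `closedForm m n` grows by `m`; in
the second, with `n = (m + 1)!` and `m ≥ 3` (this is where `n ≥ 7` enters),
`closedForm (m + 1) (n + 1) − closedForm m n = (n + 1)(m + 1) − n − n·m = m + 1`.
-/

open Nat Finset

theorem Nat.le_of_factorial_lt_le_factorial_succ {m m' k : ℕ} (h : m ! < k)
    (h' : k ≤ (m' + 1)!) : m ≤ m' :=
  not_lt.mp fun hlt => by
    have := factorial_le (show m' + 1 ≤ m from hlt)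
    omega

theorem Nat.eq_of_factorial_lt_le_factorial_succ {m m' k : ℕ} (hm : m ! < k)
    (hm' : k ≤ (m + 1)!) (hl : m' ! < k) (hl' : k ≤ (m' + 1)!) : m = m' :=
  le_antisymm (le_of_factorial_lt_le_factorial_succ hm hl')
    (le_of_factorial_lt_le_factorial_succ hl hm')

theorem Nat.three_le_of_seven_le_factorial_succ {m : ℕ} (h : 7 ≤ (m + 1)!) : 3 ≤ m := by
  have : 3 ! < (m + 1)! := by
    rw [show 3 ! = 6 from rfl]
    omega
  have := (factorial_lt (by norm_num)).mp this
  omega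

theorem Nat.eq_or_eq_succ_of_factorial_lt_le_factorial_succ {m m' n : ℕ} (hm : m ! < n)
    (hm' : n ≤ (m + 1)!) (hl : m' ! < n + 1) (hl' : n + 1 ≤ (m' + 1)!) :
    m' = m ∨ (m' = m + 1 ∧ n = (m + 1)!) := by
  by_cases hn : n + 1 ≤ (m + 1)!
  · exact .inl (eq_of_factorial_lt_le_factorial_succ hl hl' (by omega) hn)
  · have hn : n = (m + 1)! := by omega
    have hlt : (m + 1)! < (m + 1 + 1)! := factorial_lt_of_lt (succ_pos m) (lt_add_one _)
    exact .inr ⟨(eq_of_factorial_lt_le_factorial_succ (m := m + 1) (by omega) (by omega)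
      hl hl').symm, hn⟩

def closedForm (m n : ℕ) : ℤ :=
  n * m - (m ! : ℤ) - 4 - ∑ k ∈ Icc 3 (m - 1), (k ! : ℤ)

theorem closedForm_succ (m n : ℕ) :
    closedForm m (n + 1) = closedForm m n + m := by
  unfold closedForm
  push_cast
  ring

theorem closedForm_factorial_succ {m : ℕ} (hm : 3 ≤ m) :
    closedForm (m + 1) ((m + 1)! + 1) = closedForm m (m + 1)! + (m + 1) := by
  have hsum : ∑ k ∈ Icc 3 m, (k ! : ℤ) = ∑ k ∈ Icc 3 (m - 1), (k ! : ℤ) + m ! := by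
    obtain ⟨j, rfl⟩ : ∃ j, m = j + 1 := ⟨m - 1, by omega⟩
    exact sum_Icc_succ_top (by omega) _
  unfold closedForm
  rw [add_tsub_cancel_right, hsum]
  push_cast
  ring

/-- For `k ≥ 3` let `M k` be the unique positive integer with
`(M k)! < k ≤ (M k + 1)!`. Then for every `n ≥ 7` (so that `M n ≥ 3`),
`Σ_{k=3}^{n} M k = n·(M n) − (M n)! − 4 − Σ_{k=3}^{M n − 1} k!`. -/
theorem sum_m_k_eq (M : ℕ → ℕ)
    (hM : ∀ k : ℕ, 3 ≤ k → 0 < M k ∧ Nat.factorial (M k) < k ∧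
      k ≤ Nat.factorial (M k + 1)) :
    ∀ n : ℕ, 7 ≤ n →
      (∑ k ∈ Finset.Icc 3 n, (M k : ℤ)) =
        (n : ℤ) * (M n : ℤ) - (Nat.factorial (M n) : ℤ) - 4 -
          ∑ k ∈ Finset.Icc 3 (M n - 1), (Nat.factorial k : ℤ) := by
  have hM_eq {k m : ℕ} (hk : 3 ≤ k) (h : m ! < k) (h' : k ≤ (m + 1)!) : M k = m :=
    eq_of_factorial_lt_le_factorial_succ (hM k hk).2.1 (hM k hk).2.2 h h'
  intro n hn
  change _ = closedForm (M n) n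
  induction n, hn using Nat.le_induction with
  | base =>
    have h3 : M 3 = 2 := hM_eq le_rfl (by decide) (by decide)
    have h4 : M 4 = 2 := hM_eq (by norm_num) (by decide) (by decide)
    have h5 : M 5 = 2 := hM_eq (by norm_num) (by decide) (by decide)
    have h6 : M 6 = 2 := hM_eq (by norm_num) (by decide) (by decide)
    have h7 : M 7 = 3 := hM_eq (by norm_num) (by decide) (by decide)
    rw [show Icc 3 7 = {3, 4, 5, 6, 7} from rfl]
    simp [closedForm, h3, h4, h5, h6, h7, factorial]
  | succ n hn ih =>
    obtain ⟨-, hlo, hhi⟩ := hM n (by omega)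
    obtain ⟨-, hlo', hhi'⟩ := hM (n + 1) (by omega)
    rw [sum_Icc_succ_top (by omega), ih]
    rcases eq_or_eq_succ_of_factorial_lt_le_factorial_succ hlo hhi hlo' hhi' with
      heq | ⟨heq, hn_eq⟩
    · rw [heq, closedForm_succ]
    · have h3 := three_le_of_seven_le_factorial_succ (hn_eq ▸ hn)
      have hstep := closedForm_factorial_succ h3
      rw [← hn_eq] at hstep
      rw [heq, hstep, Nat.cast_succ]
end

section
/- Let G be a maximal permutation graph on n vertices, where n ≥ 3. Let m_n be the unique positive integer with m_n! < n ≤ (m_n + 1)!, and for each h with 2 ≤ h ≤ m_n − 1 let i_h be the largest integer i with i > h and P(i, h) ≤ n. Then the number of edges of G satisfies |E(G)| ≤ n(n−1)/2 − Σ_{h=2}^{m_n − 1} (i_h − h). -/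
/-!
Fix a labelling witnessing that `G` is a permutation graph. For `2 ≤ h < j` with `P(j, h) ≤ n`, the
vertex pairs labelled `{h, j}` and `{1, P(j, h)}` receive the same edge label
`P(j, h) = P(P(j, h), 1)`, so at least one of them is a non-edge. Choosing one gives an injection of
such pairs `(h, j)` into the non-edges of `G`: two chosen pairs `{1, P}` can only coincide if the
edges `{h, j}` and `{h', j'}` share a label. The pairs with `2 ≤ h ≤ m - 1` and `h < j ≤ i h`
qualify, and there are `∑ (i h - h)` of them.
-/

/-- The label assigned to the edge `{u, v}` by the vertex labeling `f`
(with labels `1, …, n`): `P(max, min)`, where `max`/`min` are the larger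
and smaller of the two vertex labels `f u + 1`, `f v + 1`. -/
def permEdgeLabel {n : ℕ} (f : Fin n ≃ Fin n) (u v : Fin n) : ℕ :=
  Nat.descFactorial (max ((f u : ℕ) + 1) ((f v : ℕ) + 1))
    (min ((f u : ℕ) + 1) ((f v : ℕ) + 1))

/-- A simple graph on `n` vertices is a permutation graph if there is a
bijective labeling of its vertices by `1, …, n` such that the induced edge
labeling (by falling factorials) is injective on the edge set. -/
def IsPermutationGraph {n : ℕ} (G : SimpleGraph (Fin n)) : Prop :=
  ∃ f : Fin n ≃ Fin n, ∀ u v u' v' : Fin n, G.Adj u v → G.Adj u' v' →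
    permEdgeLabel f u v = permEdgeLabel f u' v' → s(u, v) = s(u', v')

/-- A permutation graph is maximal if adding any new edge destroys
permutability. -/
def IsMaximalPermutationGraph {n : ℕ} (G : SimpleGraph (Fin n)) : Prop :=
  IsPermutationGraph G ∧ ∀ u v : Fin n, u ≠ v → ¬ G.Adj u v →
    ¬ IsPermutationGraph (G ⊔ SimpleGraph.edge u v)

open Finset

lemma Nat.self_le_descFactorial {n k : ℕ} (hk : 1 ≤ k) (hkn : k ≤ n) : n ≤ n.descFactorial k := by
  obtain ⟨n, rfl⟩ : ∃ n', n = n' + 1 := ⟨n - 1, by omega⟩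
  obtain ⟨k, rfl⟩ : ∃ k', k = k' + 1 := ⟨k - 1, by omega⟩
  rw [Nat.succ_descFactorial_succ]
  exact Nat.le_mul_of_pos_right _ (Nat.descFactorial_pos.2 (by omega))

lemma SimpleGraph.ncard_edgeSet_add_ncard_edgeSet_compl {V : Type*} [Fintype V]
    (G : SimpleGraph V) : G.edgeSet.ncard + Gᶜ.edgeSet.ncard = (Fintype.card V).choose 2 := by
  classical
  rw [← Set.ncard_union_eq (SimpleGraph.disjoint_edgeSet.2 disjoint_compl_right),
    ← SimpleGraph.edgeSet_sup, sup_compl_eq_top,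
    ← SimpleGraph.card_edgeFinset_top_eq_card_choose_two, ← Set.ncard_coe_finset,
    SimpleGraph.coe_edgeFinset]

def IsPermutationLabeling {n : ℕ} (G : SimpleGraph (Fin n)) (f : Fin n ≃ Fin n) : Prop :=
  ∀ u v u' v' : Fin n, G.Adj u v → G.Adj u' v' →
    permEdgeLabel f u v = permEdgeLabel f u' v' → s(u, v) = s(u', v')

section LabelVertex

variable {n : ℕ} [NeZero n] (f : Fin n ≃ Fin n)

/-- The vertex labelled `a` by `f`. Labels run over `1, …, n` while `Fin n` is `0`-based; a label
outside that range gives a junk vertex. -/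
def labelVertex (a : ℕ) : Fin n := f.symm (Fin.ofNat n (a - 1))

variable {f}

lemma val_apply_labelVertex {a : ℕ} (ha : 1 ≤ a) (han : a ≤ n) :
    (f (labelVertex f a) : ℕ) + 1 = a := by
  rw [labelVertex, Equiv.apply_symm_apply, Fin.val_ofNat, Nat.mod_eq_of_lt (by omega)]
  omega

lemma labelVertex_inj {a b : ℕ} (ha : 1 ≤ a) (han : a ≤ n) (hb : 1 ≤ b) (hbn : b ≤ n) :
    labelVertex f a = labelVertex f b ↔ a = b := by
  refine ⟨fun hab => ?_, congrArg _⟩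
  rw [← val_apply_labelVertex ha han, ← val_apply_labelVertex hb hbn, hab]

lemma mk_labelVertex_eq_mk_labelVertex_iff {a b c d : ℕ} (ha : 1 ≤ a) (han : a ≤ n)
    (hb : 1 ≤ b) (hbn : b ≤ n) (hc : 1 ≤ c) (hcn : c ≤ n) (hd : 1 ≤ d) (hdn : d ≤ n) :
    s(labelVertex f a, labelVertex f b) = s(labelVertex f c, labelVertex f d) ↔
      s(a, b) = s(c, d) := by
  simp only [Sym2.eq_iff, labelVertex_inj, *]

lemma permEdgeLabel_labelVertex {a b : ℕ} (ha : 1 ≤ a) (hab : a < b) (hbn : b ≤ n) :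
    permEdgeLabel f (labelVertex f a) (labelVertex f b) = b.descFactorial a := by
  rw [permEdgeLabel, val_apply_labelVertex ha (by omega), val_apply_labelVertex (by omega) hbn,
    max_eq_right hab.le, min_eq_left hab.le]

end LabelVertex

namespace IsPermutationLabeling

variable {n : ℕ} [NeZero n] {G : SimpleGraph (Fin n)} {f : Fin n ≃ Fin n}

lemma eq_of_adj_of_descFactorial_eq (hf : IsPermutationLabeling G f) {a b c d : ℕ}
    (ha : 1 ≤ a) (hab : a < b) (hbn : b ≤ n) (hc : 1 ≤ c) (hcd : c < d) (hdn : d ≤ n)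
    (hadj : G.Adj (labelVertex f a) (labelVertex f b))
    (hadj' : G.Adj (labelVertex f c) (labelVertex f d))
    (hP : b.descFactorial a = d.descFactorial c) : a = c ∧ b = d := by
  have := hf _ _ _ _ hadj hadj' (by
    rw [permEdgeLabel_labelVertex ha hab hbn, permEdgeLabel_labelVertex hc hcd hdn, hP])
  rw [mk_labelVertex_eq_mk_labelVertex_iff, Sym2.eq_iff] at this <;> omega

theorem card_le_ncard_compl (hf : IsPermutationLabeling G f) (S : Finset (ℕ × ℕ))
    (hS : ∀ h j, (h, j) ∈ S → 2 ≤ h ∧ h < j ∧ j.descFactorial h ≤ n) :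
    S.card ≤ Gᶜ.edgeSet.ncard := by
  classical
  have hS' : ∀ h j, (h, j) ∈ S → 2 ≤ h ∧ h < j ∧ j ≤ j.descFactorial h ∧
      j.descFactorial h ≤ n := by
    intro h j hp
    obtain ⟨h2, hlt, hP⟩ := hS h j hp
    exact ⟨h2, hlt, Nat.self_le_descFactorial (by omega) hlt.le, hP⟩
  let F : ℕ × ℕ → Sym2 (Fin n) := fun p =>
    if G.Adj (labelVertex f p.1) (labelVertex f p.2) then
      s(labelVertex f 1, labelVertex f (p.2.descFactorial p.1))
    else s(labelVertex f p.1, labelVertex f p.2)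
  rw [← Set.ncard_coe_finset]
  refine Set.ncard_le_ncard_of_injOn F ?_ ?_
  · rintro ⟨h, j⟩ hp
    obtain ⟨h2, hhj, hjP, hPn⟩ := hS' h j hp
    by_cases hadj : G.Adj (labelVertex f h) (labelVertex f j)
    · simp only [F, if_pos hadj, SimpleGraph.mem_edgeSet, SimpleGraph.compl_adj]
      refine ⟨by rw [Ne, labelVertex_inj] <;> omega, fun hadj₁ => ?_⟩
      have := hf.eq_of_adj_of_descFactorial_eq (by omega) hhj (by omega) le_rfl (by omega) hPn
        hadj hadj₁ (Nat.descFactorial_one _).symm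
      omega
    · simp only [F, if_neg hadj, SimpleGraph.mem_edgeSet, SimpleGraph.compl_adj]
      exact ⟨by rw [Ne, labelVertex_inj] <;> omega, hadj⟩
  · rintro ⟨h, j⟩ hp ⟨h', j'⟩ hp' hF
    obtain ⟨h2, hhj, hjP, hPn⟩ := hS' h j hp
    obtain ⟨h2', hhj', hjP', hPn'⟩ := hS' h' j' hp'
    simp only [F] at hF
    rw [Prod.mk.injEq]
    split_ifs at hF with hadj hadj'
    · rw [mk_labelVertex_eq_mk_labelVertex_iff, Sym2.eq_iff] at hF <;> try omega
      exact hf.eq_of_adj_of_descFactorial_eq (by omega) hhj (by omega) (by omega) hhj' (by omega)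
        hadj hadj' (by omega)
    all_goals rw [mk_labelVertex_eq_mk_labelVertex_iff, Sym2.eq_iff] at hF <;> omega

theorem _root_.IsPermutationGraph.ncard_edgeSet_add_card_le {G : SimpleGraph (Fin n)}
    (hG : IsPermutationGraph G) (S : Finset (ℕ × ℕ))
    (hS : ∀ h j, (h, j) ∈ S → 2 ≤ h ∧ h < j ∧ j.descFactorial h ≤ n) :
    G.edgeSet.ncard + S.card ≤ n * (n - 1) / 2 := by
  obtain ⟨f, hf⟩ := hG
  have := G.ncard_edgeSet_add_ncard_edgeSet_compl
  rw [Fintype.card_fin, Nat.choose_two_right] at this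
  have := card_le_ncard_compl (f := f) hf S hS
  omega

end IsPermutationLabeling

theorem edge_count_upper_bound_general (n : ℕ) (hn : 3 ≤ n) (G : SimpleGraph (Fin n))
    (hG : IsMaximalPermutationGraph G)
    (m : ℕ)
    (i : ℕ → ℕ)
    (hi : ∀ h : ℕ, 2 ≤ h → h ≤ m - 1 →
      h < i h ∧ Nat.descFactorial (i h) h ≤ n ∧
        ∀ j : ℕ, h < j → Nat.descFactorial j h ≤ n → j ≤ i h) :
    G.edgeSet.ncard ≤ n * (n - 1) / 2 - ∑ h ∈ Finset.Icc 2 (m - 1), (i h - h) := by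
  have : NeZero n := ⟨by omega⟩
  let T : Finset (ℕ × ℕ) :=
    ((Icc 2 (m - 1)).sigma fun h => Ioc h (i h)).map (Equiv.sigmaEquivProd ℕ ℕ).toEmbedding
  have hT : ∀ h j, (h, j) ∈ T → 2 ≤ h ∧ h < j ∧ j.descFactorial h ≤ n := by
    intro h j hp
    simp only [T, mem_map_equiv, mem_sigma, mem_Icc, mem_Ioc] at hp
    obtain ⟨⟨h2, hm⟩, hhj, hji⟩ := hp
    exact ⟨h2, hhj, (Nat.descFactorial_le h hji).trans (hi h h2 hm).2.1⟩
  have hTcard : T.card = ∑ h ∈ Icc 2 (m - 1), (i h - h) := by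
    simp [T, card_sigma]
  have := hG.1.ncard_edgeSet_add_card_le T hT
  omega

/-- If `G` is a maximal permutation graph on `n ≥ 3` vertices, `m` is the
unique positive integer with `m! < n ≤ (m+1)!`, and for each `2 ≤ h ≤ m − 1`
`i h` is the largest integer `i > h` with `P(i, h) ≤ n`, then
`|E(G)| ≤ n(n−1)/2 − Σ_{h=2}^{m−1} (i h − h)`. -/
theorem edge_count_upper_bound (n : ℕ) (hn : 3 ≤ n) (G : SimpleGraph (Fin n))
    (hG : IsMaximalPermutationGraph G)
    (m : ℕ) (hm : 0 < m) (hm₁ : Nat.factorial m < n)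
    (hm₂ : n ≤ Nat.factorial (m + 1))
    (i : ℕ → ℕ)
    (hi : ∀ h : ℕ, 2 ≤ h → h ≤ m - 1 →
      h < i h ∧ Nat.descFactorial (i h) h ≤ n ∧
        ∀ j : ℕ, h < j → Nat.descFactorial j h ≤ n → j ≤ i h) :
    G.edgeSet.ncard ≤ n * (n - 1) / 2 - ∑ h ∈ Finset.Icc 2 (m - 1), (i h - h) :=
  edge_count_upper_bound_general n hn G hG m i hi
end
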